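/- Let (g, [·,·]_g, φ_g) and (h, [·,·]_h, φ_h) be regular Hom-Lie algebras over a field K, and let (ρ¹, ω¹) and (ρ², ω²) be two pairs satisfying conditions (p1)–(p5), giving two Hom-Lie algebra structures (g ⊕ h, [·,·]_{(ρ¹,ω¹)}, φ) and (g ⊕ h, [·,·]_{(ρ²,ω²)}, φ) with φ(x+u) = φ_g(x) + φ_h(u). For a linear map τ : g → h define θ : g ⊕ h → g ⊕ h by θ(x+u) = x − τ(x) + u. Then θ is a Hom-Lie algebra morphism from (g ⊕ h, [·,·]_{(ρ²,ω²)}, φ) to (g ⊕ h, [·,·]_{(ρ¹,ω¹)}, φ) (i.e. θ preserves brackets and θ∘φ = φ∘θ) if and only if the following three conditions hold for all x,y ∈ g and u ∈ h: (i) φ_h(τ(x)) = τ(φ_g(x)); (ii) ρ¹_x(u) − ρ²_x(u) = [τ(x), u]_h; (iii) ω¹(x,y) − ω²(x,y) = ρ²_x(τ(y)) − ρ²_y(τ(x)) + [τ(x), τ(y)]_h − τ([x,y]_g). -/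
import Mathlib


/-- The bracket `[A,B]_φ = φ∘A∘φ⁻¹∘B∘φ⁻¹ − φ∘B∘φ⁻¹∘A∘φ⁻¹` on `gl(h)`. -/
def glBr {K : Type*} [Field K] {h : Type*} [AddCommGroup h] [Module K h]
    (φ : h ≃ₗ[K] h) (A B : h →ₗ[K] h) : h →ₗ[K] h :=
  φ.toLinearMap ∘ₗ A ∘ₗ φ.symm.toLinearMap ∘ₗ B ∘ₗ φ.symm.toLinearMap
  - φ.toLinearMap ∘ₗ B ∘ₗ φ.symm.toLinearMap ∘ₗ A ∘ₗ φ.symm.toLinearMap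

/-- The bracket `[x+u, y+v]_{(ρ,ω)} = [x,y]_g + ω(x,y) + ρ_x(v) − ρ_y(u) + [u,v]_h`
on `g ⊕ h`. -/
def extBr {K : Type*} [Field K] {g h : Type*}
    [AddCommGroup g] [Module K g] [AddCommGroup h] [Module K h]
    (brg : g →ₗ[K] g →ₗ[K] g) (brh : h →ₗ[K] h →ₗ[K] h)
    (ρ : g →ₗ[K] Module.End K h) (ω : g →ₗ[K] g →ₗ[K] h)
    (X Y : g × h) : g × h :=
  (brg X.1 Y.1, ω X.1 Y.1 + ρ X.1 Y.2 - ρ Y.1 X.2 + brh X.2 Y.2)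

/-- The map `φ(x+u) = φ_g(x) + φ_h(u)` on `g ⊕ h`. -/
def extPhi {K : Type*} [Field K] {g h : Type*}
    [AddCommGroup g] [Module K g] [AddCommGroup h] [Module K h]
    (φg : g ≃ₗ[K] g) (φh : h ≃ₗ[K] h) (X : g × h) : g × h :=
  (φg X.1, φh X.2)

/-- Conditions (p1)–(p5) on a pair `(ρ, ω)`. -/
def ExtConds {K : Type*} [Field K] {g h : Type*}
    [AddCommGroup g] [Module K g] [AddCommGroup h] [Module K h]
    (brg : g →ₗ[K] g →ₗ[K] g) (brh : h →ₗ[K] h →ₗ[K] h)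
    (φg : g ≃ₗ[K] g) (φh : h ≃ₗ[K] h)
    (ρ : g →ₗ[K] Module.End K h) (ω : g →ₗ[K] g →ₗ[K] h) : Prop :=
  (∀ x y, φh (ω x y) = ω (φg x) (φg y)) ∧
  (∀ x u, φh (ρ x u) = ρ (φg x) (φh u)) ∧
  (∀ x u v, ρ x (brh u v)
    = brh (φh u) (φh.symm (ρ x (φh v))) + brh (φh.symm (ρ x (φh u))) (φh v)) ∧
  (∀ x y, glBr φh (ρ x) (ρ y) - ρ (brg x y) = brh (ω x y)) ∧
  (∀ x y z,
    ρ (φg x) (ω y z) + ρ (φg y) (ω z x) + ρ (φg z) (ω x y)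
      = ω (brg x y) (φg z) + ω (brg y z) (φg x) + ω (brg z x) (φg y))

/-- For a linear map `τ : g → h`, the map `θ(x+u) = x − τ(x) + u` is a Hom-Lie
algebra morphism from `(g ⊕ h, [·,·]_{(ρ²,ω²)}, φ)` to `(g ⊕ h, [·,·]_{(ρ¹,ω¹)}, φ)`
if and only if conditions (i), (ii), (iii) hold. -/
theorem stmt15 {K : Type*} [Field K] {g h : Type*}
    [AddCommGroup g] [Module K g] [AddCommGroup h] [Module K h]
    -- the regular Hom-Lie algebra g
    (brg : g →ₗ[K] g →ₗ[K] g) (φg : g ≃ₗ[K] g)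
    (hskewg : ∀ x y, brg x y = - brg y x)
    (hmulg : ∀ x y, φg (brg x y) = brg (φg x) (φg y))
    (hjacg : ∀ x y z,
      brg (φg x) (brg y z) + brg (φg y) (brg z x) + brg (φg z) (brg x y) = 0)
    -- the regular Hom-Lie algebra h
    (brh : h →ₗ[K] h →ₗ[K] h) (φh : h ≃ₗ[K] h)
    (hskewh : ∀ u v, brh u v = - brh v u)
    (hmulh : ∀ u v, φh (brh u v) = brh (φh u) (φh v))
    (hjach : ∀ u v w,
      brh (φh u) (brh v w) + brh (φh v) (brh w u) + brh (φh w) (brh u v) = 0)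
    -- two pairs satisfying (p1)-(p5)
    (ρ₁ : g →ₗ[K] Module.End K h) (ω₁ : g →ₗ[K] g →ₗ[K] h)
    (hω₁skew : ∀ x y, ω₁ x y = - ω₁ y x)
    (h₁ : ExtConds brg brh φg φh ρ₁ ω₁)
    (ρ₂ : g →ₗ[K] Module.End K h) (ω₂ : g →ₗ[K] g →ₗ[K] h)
    (hω₂skew : ∀ x y, ω₂ x y = - ω₂ y x)
    (h₂ : ExtConds brg brh φg φh ρ₂ ω₂)
    -- the linear map τ and the induced map θ(x+u) = x − τ(x) + u
    (τ : g →ₗ[K] h) (θ : g × h → g × h)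
    (hθ : ∀ X : g × h, θ X = (X.1, X.2 - τ X.1)) :
    -- θ is a Hom-Lie algebra morphism ...
    ((∀ X Y : g × h, θ (extBr brg brh ρ₂ ω₂ X Y)
        = extBr brg brh ρ₁ ω₁ (θ X) (θ Y)) ∧
     (∀ X : g × h, θ (extPhi φg φh X) = extPhi φg φh (θ X)))
    ↔
    -- ... if and only if (i), (ii), (iii) hold
    ((∀ x, φh (τ x) = τ (φg x)) ∧
     (∀ x u, ρ₁ x u - ρ₂ x u = brh (τ x) u) ∧
     (∀ x y, ω₁ x y - ω₂ x y
        = ρ₂ x (τ y) - ρ₂ y (τ x) + brh (τ x) (τ y) - τ (brg x y))) := by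

  constructor
  · rintro ⟨hbr, hphi⟩
    have hi : ∀ x, φh (τ x) = τ (φg x) := by
      intro x
      have := congrArg Prod.snd (hphi (x, 0))
      simp [hθ, extPhi] at this
      exact this.symm
    have hii : ∀ x u, ρ₁ x u - ρ₂ x u = brh (τ x) u := by
      intro x u
      have key := congrArg Prod.snd (hbr (x, 0) (0, u))
      simp [hθ, extBr, LinearMap.neg_apply] at key
      rw [key]; abel
    refine ⟨hi, hii, ?_⟩
    intro x y
    have e1 : ∀ a b, ρ₁ a b = ρ₂ a b + brh (τ a) b := by
      intro a b; rw [← hii a b]; abel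
    have key := congrArg Prod.snd (hbr (x, 0) (y, 0))
    simp [hθ, extBr, LinearMap.neg_apply, e1] at key
    rw [hskewh (τ y) (τ x)] at key
    replace key := key.symm
    rw [← sub_eq_zero] at key ⊢
    refine Eq.trans ?_ key
    abel
  · rintro ⟨hi, hii, hiii⟩
    have e1 : ∀ a b, ρ₁ a b = ρ₂ a b + brh (τ a) b := by
      intro a b; rw [← hii a b]; abel
    have e3 : ∀ a b, ω₁ a b = ω₂ a b + (ρ₂ a (τ b) - ρ₂ b (τ a) + brh (τ a) (τ b)
        - τ (brg a b)) := by
      intro a b; rw [← hiii a b]; abel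
    constructor
    · intro X Y
      obtain ⟨x, u⟩ := X; obtain ⟨y, v⟩ := Y
      simp only [hθ, extBr]
      ext
      · rfl
      simp only [LinearMap.sub_apply, map_sub, e1, e3, hskewh (τ y) (τ x),
        LinearMap.neg_apply, hskewh (τ y) u]
      abel
    · intro X
      obtain ⟨x, u⟩ := X
      simp [hθ, extPhi, map_sub, hi x]
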